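/- arXiv:2212.05338 — 2 statements merged into one kernel-verified Lean document; each statement's English description precedes it below -/
import Mathlib

section
/- With the b_Z = 0 system (A = (0,0,−(1/2)b_φ(x²+y²)), W = −(1/8)b_φ²(x²+y²)² + b_φ(w₃(x²+y²) + w₁x + w₂y)) and the integrals X₁^a, X₁^b, X₁^c, X₃¹ = p₃ as defined in the paper (with s_{Z3} arbitrary), the Poisson bracket identity {X₁^a, X₁^b} = 2b_φ(s_{Z3}X₃¹ − X₁^c) holds. -/
noncomputable def pderiv (i : Fin 6) (F : (Fin 6 → ℝ) → ℝ) (q : Fin 6 → ℝ) : ℝ :=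
  fderiv ℝ F q (Pi.single i 1)

/-- Canonical Poisson bracket on phase space ℝ⁶: coordinates `q 0, q 1, q 2` are
positions and `q 3, q 4, q 5` are momenta. -/
noncomputable def poisson (F G : (Fin 6 → ℝ) → ℝ) (q : Fin 6 → ℝ) : ℝ :=
  ∑ k : Fin 3, (pderiv (Fin.castAdd 3 k) F q * pderiv (Fin.natAdd 3 k) G q
    - pderiv (Fin.castAdd 3 k) G q * pderiv (Fin.natAdd 3 k) F q)

/-- squared planar radius -/
noncomputable def r2 (q : Fin 6 → ℝ) : ℝ := (q 0)^2 + (q 1)^2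

/-- covariant momentum p₃ + A₃ with A₃ = -(1/2) bφ (x²+y²) -/
noncomputable def P3A (bφ : ℝ) (q : Fin 6 → ℝ) : ℝ := q 5 - (1/2)*bφ*r2 q

/-- covariant angular momentum l₃^A = x p₂ - y p₁ (here A₁ = A₂ = 0) -/
noncomputable def L3A (q : Fin 6 → ℝ) : ℝ := q 0 * q 4 - q 1 * q 3

/-- Hamiltonian of the b_Z = 0 system -/
noncomputable def Ham (bφ w₁ w₂ w₃ : ℝ) (q : Fin 6 → ℝ) : ℝ :=
  (1/2)*((q 3)^2 + (q 4)^2 + (P3A bφ q)^2)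
    - (1/8)*bφ^2*(r2 q)^2 + bφ*(w₃*r2 q + w₁*q 0 + w₂*q 1)

noncomputable def X1a (bφ w₁ w₃ : ℝ) (q : Fin 6 → ℝ) : ℝ :=
  (q 3)^2 - bφ*(q 0)^2*P3A bφ q - (1/2)*bφ^2*(q 0)^2*r2 q
    + 2*bφ*w₃*(q 0)^2 + 2*bφ*w₁*q 0

noncomputable def X1b (bφ w₁ w₂ w₃ : ℝ) (q : Fin 6 → ℝ) : ℝ :=
  q 3 * q 4 - bφ*q 0*q 1*P3A bφ q - (1/2)*bφ^2*q 0*q 1*r2 q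
    + 2*bφ*w₃*q 0*q 1 + bφ*w₂*q 0 + bφ*w₁*q 1

noncomputable def X1c (bφ w₁ w₂ w₃ sZ3 : ℝ) (q : Fin 6 → ℝ) : ℝ :=
  L3A q * P3A bφ q + w₂*q 3 - w₁*q 4 + ((1/2)*bφ*r2 q - 2*w₃)*L3A q
    + sZ3*P3A bφ q + (1/2)*bφ*sZ3*r2 q

/-- first--order integral X₃¹ = p₃ -/
noncomputable def X31 (q : Fin 6 → ℝ) : ℝ := q 5


lemma pderiv_coord (i j : Fin 6) (q : Fin 6 → ℝ) :
    pderiv i (fun q => q j) q = if i = j then 1 else 0 := by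
  have h : fderiv ℝ (fun q : Fin 6 → ℝ => q j) q = ContinuousLinearMap.proj j :=
    (ContinuousLinearMap.proj j : (Fin 6 → ℝ) →L[ℝ] ℝ).fderiv
  simp [pderiv, h, Pi.single_apply, eq_comm]

lemma pderiv_const (i : Fin 6) (c : ℝ) (q : Fin 6 → ℝ) :
    pderiv i (fun _ => c) q = 0 := by simp [pderiv]

lemma pderiv_add (i : Fin 6) (F G : (Fin 6 → ℝ) → ℝ) (q : Fin 6 → ℝ)
    (hF : DifferentiableAt ℝ F q) (hG : DifferentiableAt ℝ G q) :
    pderiv i (fun q => F q + G q) q = pderiv i F q + pderiv i G q := by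
  simp [pderiv, fderiv_fun_add hF hG]

lemma pderiv_sub (i : Fin 6) (F G : (Fin 6 → ℝ) → ℝ) (q : Fin 6 → ℝ)
    (hF : DifferentiableAt ℝ F q) (hG : DifferentiableAt ℝ G q) :
    pderiv i (fun q => F q - G q) q = pderiv i F q - pderiv i G q := by
  simp [pderiv, fderiv_fun_sub hF hG]

lemma pderiv_mul (i : Fin 6) (F G : (Fin 6 → ℝ) → ℝ) (q : Fin 6 → ℝ)
    (hF : DifferentiableAt ℝ F q) (hG : DifferentiableAt ℝ G q) :
    pderiv i (fun q => F q * G q) q = pderiv i F q * G q + F q * pderiv i G q := by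
  simp [pderiv, fderiv_fun_mul hF hG]; ring

lemma pderiv_sq (i : Fin 6) (F : (Fin 6 → ℝ) → ℝ) (q : Fin 6 → ℝ)
    (hF : DifferentiableAt ℝ F q) :
    pderiv i (fun q => F q ^ 2) q = 2 * F q * pderiv i F q := by
  have : (fun q => F q ^ 2) = fun q => F q * F q := by ext q; ring
  rw [this, pderiv_mul i F F q hF hF]; ring

set_option maxHeartbeats 2000000 in
/-- `{X₁^a, X₁^b} = 2b_φ(s_{Z3}X₃¹ - X₁^c)`. -/
theorem poisson_X1a_X1b (bφ w₁ w₂ w₃ sZ3 : ℝ) :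
    ∀ q : Fin 6 → ℝ,
      poisson (X1a bφ w₁ w₃) (X1b bφ w₁ w₂ w₃) q
        = 2*bφ*(sZ3 * X31 q - X1c bφ w₁ w₂ w₃ sZ3 q) := by
  intro q
  have hA : X1a bφ w₁ w₃ = fun q : Fin 6 → ℝ => (q 3)^2 - bφ*(q 0)^2*(q 5 - (1/2)*bφ*((q 0)^2 + (q 1)^2)) - (1/2)*bφ^2*(q 0)^2*((q 0)^2 + (q 1)^2) + 2*bφ*w₃*(q 0)^2 + 2*bφ*w₁*q 0 := by
    funext q; simp [X1a, P3A, r2]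
  have hB : X1b bφ w₁ w₂ w₃ = fun q : Fin 6 → ℝ => q 3 * q 4 - bφ*q 0*q 1*(q 5 - (1/2)*bφ*((q 0)^2 + (q 1)^2)) - (1/2)*bφ^2*q 0*q 1*((q 0)^2 + (q 1)^2) + 2*bφ*w₃*q 0*q 1 + bφ*w₂*q 0 + bφ*w₁*q 1 := by
    funext q; simp [X1b, P3A, r2]
  simp (disch := fun_prop) [poisson, Fin.sum_univ_three, hA, hB, X1c, X31, P3A, L3A, r2,
    pderiv_add, pderiv_sub, pderiv_mul, pderiv_sq, pderiv_coord, pderiv_const,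
    show (Fin.castAdd 3 (0:Fin 3) : Fin 6) = 0 from rfl,
    show (Fin.castAdd 3 (1:Fin 3) : Fin 6) = 1 from rfl,
    show (Fin.castAdd 3 (2:Fin 3) : Fin 6) = 2 from rfl,
    show (Fin.natAdd 3 (0:Fin 3) : Fin 6) = 3 from rfl,
    show (Fin.natAdd 3 (1:Fin 3) : Fin 6) = 4 from rfl,
    show (Fin.natAdd 3 (2:Fin 3) : Fin 6) = 5 from rfl,
    show (Fin.addNat (0:Fin 3) 3 : Fin 6) = 3 from rfl,
    show (Fin.addNat (1:Fin 3) 3 : Fin 6) = 4 from rfl,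
    show (Fin.addNat (2:Fin 3) 3 : Fin 6) = 5 from rfl]
  ring
end

section
/- With the b_Z = 0 system and integrals as in the paper (H = (1/2)Σ(p_i^A)² + W), the Poisson bracket identity {X₁^b, X₁^c} = (X₃¹ − 2w₃)((X₃¹)² + 2X₁^a − 2H) + b_φ(w₂² − w₁²) holds. -/
lemma deriv_cmul (c x : ℝ) : deriv (fun y : ℝ => c * y) x = c := by
  simpa using ((hasDerivAt_id x).const_mul c).deriv

lemma pderiv_eq (i : Fin 6) (F : (Fin 6 → ℝ) → ℝ) (q : Fin 6 → ℝ)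
    (h : DifferentiableAt ℝ F q) :
    pderiv i F q = deriv (fun t : ℝ => F (Function.update q i t)) (q i) := by
  have hg : HasDerivAt (fun t : ℝ => Function.update q i t) (Pi.single i 1) (q i) := by
    have : (fun t : ℝ => Function.update q i t)
        = fun t : ℝ => q + (t - q i) • (Pi.single i 1 : Fin 6 → ℝ) := by
      funext t; funext j
      by_cases hj : j = i
      · subst hj; simp
      · simp [Function.update_of_ne hj, Pi.single_eq_of_ne hj]
    rw [this]
    have := ((hasDerivAt_id (q i)).sub_const (q i)).smul_const (Pi.single i 1 : Fin 6 → ℝ)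
    simpa using this.const_add q
  have hq : Function.update q i (q i) = q := Function.update_eq_self i q
  have h' : HasFDerivAt F (fderiv ℝ F q) (Function.update q i (q i)) := by
    rw [hq]; exact h.hasFDerivAt
  have h2 := h'.comp_hasDerivAt (q i) hg
  exact (h2.deriv).symm

set_option maxHeartbeats 4000000 in
/-- `{X₁^b, X₁^c} = (X₃¹ - 2w₃)((X₃¹)² + 2X₁^a - 2H) + b_φ(w₂² - w₁²)`. -/
theorem poisson_X1b_X1c (bφ w₁ w₂ w₃ sZ3 : ℝ) :
    ∀ q : Fin 6 → ℝ,
      poisson (X1b bφ w₁ w₂ w₃) (X1c bφ w₁ w₂ w₃ sZ3) q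
        = (X31 q - 2*w₃) * ((X31 q)^2 + 2 * X1a bφ w₁ w₃ q - 2 * Ham bφ w₁ w₂ w₃ q)
          + bφ*(w₂^2 - w₁^2) := by
  intro q
  have d1 : DifferentiableAt ℝ (X1b bφ w₁ w₂ w₃) q := by
    unfold X1b P3A r2; fun_prop
  have d2 : DifferentiableAt ℝ (X1c bφ w₁ w₂ w₃ sZ3) q := by
    unfold X1c L3A P3A r2; fun_prop
  simp only [poisson, Fin.sum_univ_three,
    show (Fin.castAdd 3 (0:Fin 3)) = (0:Fin 6) from rfl,
    show (Fin.castAdd 3 (1:Fin 3)) = (1:Fin 6) from rfl,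
    show (Fin.castAdd 3 (2:Fin 3)) = (2:Fin 6) from rfl,
    show (Fin.natAdd 3 (0:Fin 3)) = (3:Fin 6) from rfl,
    show (Fin.natAdd 3 (1:Fin 3)) = (4:Fin 6) from rfl,
    show (Fin.natAdd 3 (2:Fin 3)) = (5:Fin 6) from rfl,
    pderiv_eq _ _ q d1, pderiv_eq _ _ q d2]
  simp only [X1b, X1c, L3A, P3A, r2, Function.update_self,
    Function.update_of_ne (show (0:Fin 6) ≠ 1 by decide),
    Function.update_of_ne (show (0:Fin 6) ≠ 2 by decide),
    Function.update_of_ne (show (0:Fin 6) ≠ 3 by decide),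
    Function.update_of_ne (show (0:Fin 6) ≠ 4 by decide),
    Function.update_of_ne (show (0:Fin 6) ≠ 5 by decide),
    Function.update_of_ne (show (1:Fin 6) ≠ 0 by decide),
    Function.update_of_ne (show (1:Fin 6) ≠ 2 by decide),
    Function.update_of_ne (show (1:Fin 6) ≠ 3 by decide),
    Function.update_of_ne (show (1:Fin 6) ≠ 4 by decide),
    Function.update_of_ne (show (1:Fin 6) ≠ 5 by decide),
    Function.update_of_ne (show (2:Fin 6) ≠ 0 by decide),
    Function.update_of_ne (show (2:Fin 6) ≠ 1 by decide),
    Function.update_of_ne (show (2:Fin 6) ≠ 3 by decide),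
    Function.update_of_ne (show (2:Fin 6) ≠ 4 by decide),
    Function.update_of_ne (show (2:Fin 6) ≠ 5 by decide),
    Function.update_of_ne (show (3:Fin 6) ≠ 0 by decide),
    Function.update_of_ne (show (3:Fin 6) ≠ 1 by decide),
    Function.update_of_ne (show (3:Fin 6) ≠ 2 by decide),
    Function.update_of_ne (show (3:Fin 6) ≠ 4 by decide),
    Function.update_of_ne (show (3:Fin 6) ≠ 5 by decide),
    Function.update_of_ne (show (4:Fin 6) ≠ 0 by decide),
    Function.update_of_ne (show (4:Fin 6) ≠ 1 by decide),
    Function.update_of_ne (show (4:Fin 6) ≠ 2 by decide),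
    Function.update_of_ne (show (4:Fin 6) ≠ 3 by decide),
    Function.update_of_ne (show (4:Fin 6) ≠ 5 by decide),
    Function.update_of_ne (show (5:Fin 6) ≠ 0 by decide),
    Function.update_of_ne (show (5:Fin 6) ≠ 1 by decide),
    Function.update_of_ne (show (5:Fin 6) ≠ 2 by decide),
    Function.update_of_ne (show (5:Fin 6) ≠ 3 by decide),
    Function.update_of_ne (show (5:Fin 6) ≠ 4 by decide)]
  simp (disch := fun_prop) [deriv_add, deriv_sub, deriv_mul, deriv_pow, deriv_cmul]
  simp only [X31, X1a, Ham, P3A, r2]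
  ring
end
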